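/- Define Q_d(λ) = q_d(λ)·q_{d-2}(λ) − q_{d-1}(λ)^2 where q_n = M_{K_n}. Then for d ≥ 5, Q_d(λ) = λ·q_{d-3}(λ)·(q_{d-2}(λ) − λ·q_{d-3}(λ)) + (d-1)(d-3)·λ^2·Q_{d-2}(λ). -/

import Mathlib

open Finset SimpleGraph

noncomputable section

/-- `M` is a matching of `G`: a finset of edges of `G`, pairwise vertex-disjoint. -/
def IsMatchingSet {V : Type*} (G : SimpleGraph V) (M : Finset (Sym2 V)) : Prop :=
  (∀ e ∈ M, e ∈ G.edgeSet) ∧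
    ∀ e ∈ M, ∀ f ∈ M, e ≠ f → ∀ v : V, ¬(v ∈ e ∧ v ∈ f)

/-- The finset of all matchings of `G`. -/
def matchingsOf {V : Type*} [Fintype V] (G : SimpleGraph V) : Finset (Finset (Sym2 V)) := by
  classical exact Finset.univ.filter fun M => IsMatchingSet G M

/-- `m_k(G)`: the number of matchings of size `k` in `G`. -/
def mCount {V : Type*} [Fintype V] (G : SimpleGraph V) (k : ℕ) : ℕ := by
  classical exact ((matchingsOf G).filter fun M => M.card = k).card

/-- The matching generating polynomial (partition function) `M_G(λ) = ∑_M λ^{|M|}`. -/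
def matchingGen {V : Type*} [Fintype V] (G : SimpleGraph V) (lam : ℝ) : ℝ :=
  ∑ M ∈ matchingsOf G, lam ^ M.card

/-- `q n` : the matching generating polynomial of the complete graph `K_n`. -/
def q (n : ℕ) (lam : ℝ) : ℝ := matchingGen (⊤ : SimpleGraph (Fin n)) lam

/-- `Q_d(λ) = q_d(λ)·q_{d-2}(λ) − q_{d-1}(λ)²`. -/
def Q (d : ℕ) (lam : ℝ) : ℝ := q d lam * q (d - 2) lam - (q (d - 1) lam) ^ 2

/-!
Fix a vertex `v` of `K_{n+2}`. A matching either avoids `v`, or contains exactly one of the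
`n + 1` edges `vw`, and removing that edge leaves a matching avoiding `v` and `w`. Matchings of a
complete graph avoiding a vertex set are the matchings of the complete graph on its complement,
whose generating polynomial depends only on the number of vertices. Hence
`q_{n+2} = q_{n+1} + (n+1)λ q_n`, and substituting this for `q_d`, `q_{d-1}`, `q_{d-2}` turns the
claim into a polynomial identity in `q_{d-3}` and `q_{d-4}`.
-/

section

variable {V W : Type*}

@[simp]
lemma mem_matchingsOf [Fintype V] {G : SimpleGraph V} {M : Finset (Sym2 V)} :
    M ∈ matchingsOf G ↔ IsMatchingSet G M := by
  classical
  simp [matchingsOf]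

lemma isMatchingSet_top_iff {M : Finset (Sym2 V)} :
    IsMatchingSet (⊤ : SimpleGraph V) M ↔
      (∀ e ∈ M, ¬e.IsDiag) ∧ ∀ e ∈ M, ∀ f ∈ M, e ≠ f → ∀ v : V, ¬(v ∈ e ∧ v ∈ f) := by
  rw [IsMatchingSet, edgeSet_top]
  rfl

lemma IsMatchingSet.mono {G : SimpleGraph V} {M N : Finset (Sym2 V)} (hM : IsMatchingSet G M)
    (hNM : N ⊆ M) : IsMatchingSet G N :=
  ⟨fun e he => hM.1 e (hNM he), fun e he f hf => hM.2 e (hNM he) f (hNM hf)⟩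

lemma IsMatchingSet.eq_of_mem_of_mem {G : SimpleGraph V} {M : Finset (Sym2 V)}
    (hM : IsMatchingSet G M) {e f : Sym2 V} (he : e ∈ M) (hf : f ∈ M) {v : V} (hve : v ∈ e)
    (hvf : v ∈ f) : e = f :=
  by_contra fun hef => hM.2 e he f hf hef v ⟨hve, hvf⟩

lemma isMatchingSet_top_image_iff [DecidableEq V] {f : W → V} (hf : Function.Injective f)
    {M : Finset (Sym2 W)} :
    IsMatchingSet (⊤ : SimpleGraph V) (M.image (Sym2.map f)) ↔ IsMatchingSet ⊤ M := by
  simp only [isMatchingSet_top_iff, forall_mem_image, Sym2.isDiag_map hf,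
    (Sym2.map.injective hf).ne_iff, Sym2.mem_map]
  refine and_congr_right fun _ => forall₂_congr fun e _ => forall₂_congr fun e' _ => ?_
  refine imp_congr_right fun _ => ⟨fun h v hv => h (f v) ⟨⟨v, hv.1, rfl⟩, v, hv.2, rfl⟩, ?_⟩
  rintro h _ ⟨⟨v, hv, rfl⟩, v', hv', hvv'⟩
  exact h v ⟨hv, hf hvv' ▸ hv'⟩

lemma Sym2.mem_range_map_of_forall_mem {f : W → V} {e : Sym2 V}
    (he : ∀ x ∈ e, x ∈ Set.range f) : e ∈ Set.range (Sym2.map f) := by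
  induction e using Sym2.ind with
  | h a b =>
    obtain ⟨a', rfl⟩ := he a (Sym2.mem_mk_left a b)
    obtain ⟨b', rfl⟩ := he _ (Sym2.mem_mk_right _ b)
    exact ⟨s(a', b'), Sym2.map_mk ..⟩

lemma IsMatchingSet.insert_top [DecidableEq V] {M : Finset (Sym2 V)}
    (hM : IsMatchingSet (⊤ : SimpleGraph V) M) {v w : V} (hvw : v ≠ w)
    (havoid : ∀ e ∈ M, ∀ x ∈ e, x ∉ ({v, w} : Finset V)) :
    IsMatchingSet (⊤ : SimpleGraph V) (insert s(v, w) M) := by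
  rw [isMatchingSet_top_iff] at hM ⊢
  refine ⟨forall_mem_insert _ _ _ |>.2 ⟨Sym2.mk_isDiag_iff.not.2 hvw, hM.1⟩, ?_⟩
  have hnew : ∀ e ∈ M, ∀ x, ¬(x ∈ s(v, w) ∧ x ∈ e) := by
    rintro e he x ⟨hx, hxe⟩
    exact havoid e he x hxe (by simpa [Sym2.mem_iff] using hx)
  intro e he f hf hef x
  rcases mem_insert.1 he with rfl | he <;> rcases mem_insert.1 hf with rfl | hf
  · exact absurd rfl hef
  · exact hnew f hf x
  · exact fun h => hnew e he x h.symm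
  · exact hM.2 e he f hf hef x

variable [Fintype V] [DecidableEq V]

lemma sum_matchings_supported_in_range [Fintype W] {f : W → V} (hf : Function.Injective f)
    (lam : ℝ) :
    ∑ M ∈ (matchingsOf (⊤ : SimpleGraph V)).filter (fun M => ∀ e ∈ M, ∀ x ∈ e, x ∈ Set.range f),
      lam ^ #M = matchingGen (⊤ : SimpleGraph W) lam := by
  classical
  have himage : (matchingsOf (⊤ : SimpleGraph V)).filter
      (fun M => ∀ e ∈ M, ∀ x ∈ e, x ∈ Set.range f) =
      (matchingsOf (⊤ : SimpleGraph W)).image (Finset.image (Sym2.map f)) := by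
    ext M
    simp only [mem_filter, mem_matchingsOf, mem_image]
    constructor
    · rintro ⟨hM, hsupp⟩
      have hpre :
          (M.preimage (Sym2.map f) (Sym2.map.injective hf).injOn).image (Sym2.map f) = M := by
        rw [image_preimage, filter_true_of_mem]
        exact fun e he => Sym2.mem_range_map_of_forall_mem (hsupp e he)
      refine ⟨_, ?_, hpre⟩
      rwa [← isMatchingSet_top_image_iff hf, hpre]
    · rintro ⟨M, hM, rfl⟩
      refine ⟨(isMatchingSet_top_image_iff hf).2 hM, ?_⟩
      simp only [forall_mem_image, Sym2.mem_map]
      rintro e - _ ⟨x, -, rfl⟩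
      exact ⟨x, rfl⟩
  rw [himage, sum_image fun _ _ _ _ h => image_injective (Sym2.map.injective hf) h, matchingGen]
  simp only [card_image_of_injective _ (Sym2.map.injective hf)]

lemma matchingGen_top_eq_q {n : ℕ} (h : Fintype.card V = n) (lam : ℝ) :
    matchingGen (⊤ : SimpleGraph V) lam = q n lam := by
  rw [q, ← sum_matchings_supported_in_range (Fintype.equivFinOfCardEq h).symm.injective,
    matchingGen]
  simp [EquivLike.range_eq_univ]

lemma sum_matchings_avoiding (s : Finset V) (lam : ℝ) :
    ∑ M ∈ (matchingsOf (⊤ : SimpleGraph V)).filter (fun M => ∀ e ∈ M, ∀ x ∈ e, x ∉ s),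
      lam ^ #M = q (Fintype.card V - #s) lam := by
  rw [← matchingGen_top_eq_q (V := {x // x ∉ s}) (by simp [Fintype.card_subtype_compl]),
    ← sum_matchings_supported_in_range Subtype.val_injective]
  simp only [Subtype.range_coe_subtype, Set.mem_ofPred_eq]

lemma sum_matchings_containing_edge {v w : V} (hvw : v ≠ w) (lam : ℝ) :
    ∑ M ∈ (matchingsOf (⊤ : SimpleGraph V)).filter (s(v, w) ∈ ·), lam ^ #M =
      lam * ∑ M ∈ (matchingsOf (⊤ : SimpleGraph V)).filter
        (fun M => ∀ e ∈ M, ∀ x ∈ e, x ∉ ({v, w} : Finset V)), lam ^ #M := by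
  rw [mul_sum]
  refine sum_nbij' (·.erase s(v, w)) (insert s(v, w)) ?_ ?_ ?_ ?_ ?_
  · simp only [mem_filter, mem_matchingsOf, and_imp]
    intro M hM hvwM
    refine ⟨hM.mono (erase_subset _ _), fun e he x hxe hx => ?_⟩
    have hx' : x ∈ s(v, w) := by simpa [Sym2.mem_iff] using hx
    exact ne_of_mem_erase he (hM.eq_of_mem_of_mem (mem_of_mem_erase he) hvwM hxe hx')
  · simp only [mem_filter, mem_matchingsOf, and_imp]
    exact fun M hM havoid => ⟨hM.insert_top hvw havoid, mem_insert_self _ _⟩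
  · exact fun M hM => insert_erase (mem_filter.1 hM).2
  · refine fun M hM => erase_insert fun hvwM => ?_
    exact (mem_filter.1 hM).2 _ hvwM v (Sym2.mem_mk_left v w) (mem_insert_self _ _)
  · intro M hM
    rw [← pow_succ', card_erase_add_one (mem_filter.1 hM).2]

lemma matchingGen_top_eq_sum_avoiding_add_sum_containing (v : V) (lam : ℝ) :
    matchingGen (⊤ : SimpleGraph V) lam =
      ∑ M ∈ (matchingsOf (⊤ : SimpleGraph V)).filter
        (fun M => ∀ e ∈ M, ∀ x ∈ e, x ∉ ({v} : Finset V)), lam ^ #M +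
      ∑ w ∈ univ.erase v, ∑ M ∈ (matchingsOf (⊤ : SimpleGraph V)).filter (s(v, w) ∈ ·),
        lam ^ #M := by
  have hcover : (matchingsOf (⊤ : SimpleGraph V)).filter
      (fun M => ¬∀ e ∈ M, ∀ x ∈ e, x ∉ ({v} : Finset V)) =
      (univ.erase v).biUnion fun w => (matchingsOf (⊤ : SimpleGraph V)).filter (s(v, w) ∈ ·) := by
    ext M
    simp only [mem_filter, mem_matchingsOf, mem_biUnion, mem_erase, mem_univ, and_true,
      mem_singleton, not_forall, not_not]
    constructor
    · rintro ⟨hM, e, he, x, hxe, rfl⟩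
      refine ⟨Sym2.Mem.other hxe, fun hw => ?_, hM, by rwa [Sym2.other_spec]⟩
      exact (isMatchingSet_top_iff.1 hM).1 e he
        (Sym2.other_spec hxe ▸ Sym2.mk_isDiag_iff.2 hw.symm)
    · rintro ⟨w, -, hM, hvw⟩
      exact ⟨hM, _, hvw, v, Sym2.mem_mk_left v w, rfl⟩
  have hdisj : (univ.erase v : Set V).PairwiseDisjoint
      fun w => (matchingsOf (⊤ : SimpleGraph V)).filter (s(v, w) ∈ ·) := by
    intro w _ w' _ hww'
    refine disjoint_filter.2 fun M hM hvw hvw' => hww' ?_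
    exact Sym2.congr_right.1 ((mem_matchingsOf.1 hM).eq_of_mem_of_mem hvw hvw'
      (Sym2.mem_mk_left v w) (Sym2.mem_mk_left v w'))
  rw [matchingGen, ← sum_filter_add_sum_filter_not _
    (fun M => ∀ e ∈ M, ∀ x ∈ e, x ∉ ({v} : Finset V)), hcover, sum_biUnion hdisj]

lemma q_add_two (n : ℕ) (lam : ℝ) :
    q (n + 2) lam = q (n + 1) lam + (n + 1) * lam * q n lam := by
  have hpair (w : Fin (n + 2)) (hw : w ∈ univ.erase 0) : #({0, w} : Finset (Fin (n + 2))) = 2 :=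
    card_pair (ne_of_mem_erase hw).symm
  rw [q, matchingGen_top_eq_sum_avoiding_add_sum_containing 0, sum_matchings_avoiding,
    sum_congr rfl fun w hw => by
      rw [sum_matchings_containing_edge (ne_of_mem_erase hw).symm, sum_matchings_avoiding,
        hpair w hw]]
  simp [card_erase_of_mem, mul_assoc]

end

/-- for `d ≥ 5`,
`Q_d(λ) = λ·q_{d-3}(λ)·(q_{d-2}(λ) − λ·q_{d-3}(λ)) + (d-1)(d-3)·λ²·Q_{d-2}(λ)`. -/
theorem Q_recursion_two (d : ℕ) (hd : 5 ≤ d) (lam : ℝ) :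
    Q d lam = lam * q (d - 3) lam * (q (d - 2) lam - lam * q (d - 3) lam)
      + ((d : ℝ) - 1) * ((d : ℝ) - 3) * lam ^ 2 * Q (d - 2) lam := by
  obtain ⟨k, rfl⟩ : ∃ k, d = k + 5 := ⟨d - 5, by omega⟩
  simp only [Q, Nat.reduceSubDiff, q_add_two (k + 3), q_add_two (k + 2), q_add_two (k + 1)]
  push_cast
  ring
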